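/- Define polynomials D(n) ∈ ℤ[x] by D(0)=1, D(1)=2x, D(2)=2x+x², D(3)=2x+2x², D(4)=x+4x²+x³, D(5)=5x²+4x³+x⁴, and D(n)=x·D(n−1)+x·D(n−2)+(x−x²)·D(n−3) for n ≥ 6. Then for all n ≥ 3 and k ≥ 0, the coefficient of x^k in D(n) equals ∑_{j=0}^{k} (binom(n−2j, k−j)·binom(j, n−k−j) + binom(n−2j−1, k−j)·binom(j, n−k−j−1) − binom(n−2j−2, k−j−2)·binom(j, n−k−j)). -/

import Mathlib

/-!
Let `a(n, k) = ∑ⱼ binom(n - 2j, k - j) binom(j, n - k - j)`. It is the coefficient of `xᵏ` in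
`Aₙ = fundamentalSeq n`, the solution of the recurrence of `D` with generating function
`1 / (1 - x t - x t² - (x - x²) t³)`, and the claimed sum is the coefficient of `xᵏ` in
`Aₙ + Aₙ₋₁ - x² Aₙ₋₂`, which agrees with `Dₙ` for `n = 3, 4, 5` and satisfies the same recurrence.
That `a` satisfies the recurrence is a Wilf–Zeilberger telescoping in `j`: applied to the summand,
the recurrence is a difference of certificates `wzCert`, by two instances of Pascal's rule.
-/

open Polynomial Finset

def binom (a b : ℤ) : ℤ := if 0 ≤ b ∧ b ≤ a then Nat.choose a.toNat b.toNat else 0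

noncomputable def D : ℕ → Polynomial ℤ
  | 0 => 1
  | 1 => 2 * X
  | 2 => 2 * X + X ^ 2
  | 3 => 2 * X + 2 * X ^ 2
  | 4 => X + 4 * X ^ 2 + X ^ 3
  | 5 => 5 * X ^ 2 + 4 * X ^ 3 + X ^ 4
  | (n + 6) => X * D (n + 5) + X * D (n + 4) + (X - X ^ 2) * D (n + 3)

lemma binom_eq_zero {a b : ℤ} (h : b < 0 ∨ a < b) : binom a b = 0 :=
  if_neg (by omega)

lemma binom_natCast (a b : ℕ) : binom a b = a.choose b := by
  unfold binom
  split_ifs with h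
  · simp
  · rw [Nat.choose_eq_zero_of_lt (by omega), Nat.cast_zero]

lemma binom_zero_right {a : ℤ} (h : 0 ≤ a) : binom a 0 = 1 := by
  simp [binom, h]

lemma binom_pascal (a b : ℤ) (h : a ≠ 0 ∨ b ≠ 0) :
    binom a b = binom (a - 1) (b - 1) + binom (a - 1) b := by
  by_cases hab : 0 < a ∧ 0 < b
  · obtain ⟨a, rfl⟩ : ∃ a' : ℕ, a = a' + 1 := ⟨(a - 1).toNat, by omega⟩
    obtain ⟨b, rfl⟩ : ∃ b' : ℕ, b = b' + 1 := ⟨(b - 1).toNat, by omega⟩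
    rw [add_sub_cancel_right, add_sub_cancel_right, ← Nat.cast_add_one, ← Nat.cast_add_one,
      binom_natCast, binom_natCast, binom_natCast, Nat.choose_succ_succ, Nat.cast_add]
  · rcases (by omega : b = 0 ∧ 0 < a ∨ b < 0 ∨ a < b ∨ a < 0) with ⟨rfl, ha⟩ | hzero
    · rw [binom_zero_right ha.le, binom_zero_right (by omega), binom_eq_zero (by omega), zero_add]
    · rw [binom_eq_zero (by omega), binom_eq_zero (by omega), binom_eq_zero (by omega), add_zero]

def binomTerm (n k j : ℤ) : ℤ :=
  binom (n - 2 * j) (k - j) * binom j (n - k - j)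

/-- With `m = n - 2j`, `i = k - j`, `r = n - k - j` the summand is `C(m, i) C(j, r)`; this
Wilf–Zeilberger certificate was found by solving for a combination of shifted summands. -/
def wzCert (n k j : ℤ) : ℤ :=
  binom (n - 2 * j - 1) (k - j - 1) * binom (j - 1) (n - k - j)
    - binom (n - 2 * j - 1) (k - j) * binom (j - 1) (n - k - j - 1)
    - binom (n - 2 * j) (k - j) * binom (j - 1) (n - k - j)

lemma binomTerm_add_three_sub_eq_wzCert_sub (n k j : ℤ) (hnk : n + 3 ≠ 0 ∨ k ≠ 0) :
    binomTerm (n + 3) k j - binomTerm (n + 2) (k - 1) j - binomTerm (n + 1) (k - 1) j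
      - binomTerm n (k - 1) j + binomTerm n (k - 2) j
      = wzCert (n + 3) k (j + 1) - wzCert (n + 3) k j := by
  have hj_side : (binom j (n + 3 - k - j) - binom (j - 1) (n + 3 - k - j - 1)
      - binom (j - 1) (n + 3 - k - j))
      * (binom (n + 3 - 2 * j) (k - j) - binom (n + 3 - 2 * j - 1) (k - j - 1)) = 0 := by
    by_cases h0 : j = 0 ∧ n + 3 - k - j = 0
    · rw [binom_pascal (n + 3 - 2 * j) (k - j) (by omega),
        binom_eq_zero (a := n + 3 - 2 * j - 1) (b := k - j) (by omega)]
      ring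
    · rw [binom_pascal j (n + 3 - k - j) (by omega)]
      ring
  have hm_side : (binom (n + 3 - 2 * j) (k - j) - binom (n + 3 - 2 * j - 1) (k - j - 1)
      - binom (n + 3 - 2 * j - 1) (k - j)) * binom (j - 1) (n + 3 - k - j - 1) = 0 := by
    by_cases h0 : n + 3 - 2 * j = 0 ∧ k - j = 0
    · rw [binom_eq_zero (a := j - 1) (b := n + 3 - k - j - 1) (by omega)]
      ring
    · rw [binom_pascal (n + 3 - 2 * j) (k - j) (by omega)]
      ring
  -- `ring_nf` puts the arguments of `binom` in normal form, so the two Pascal instances match.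
  unfold binomTerm wzCert
  ring_nf at hj_side hm_side ⊢
  linear_combination hj_side + hm_side

lemma binomTerm_eq_zero_of_lt {n k j : ℤ} (h : k < j) : binomTerm n k j = 0 := by
  rw [binomTerm, binom_eq_zero (by omega), zero_mul]

lemma binomTerm_eq_zero_of_neg {n k j : ℤ} (hn : n < 0) (hj : 0 ≤ j) : binomTerm n k j = 0 := by
  rw [binomTerm, binom_eq_zero (by omega), zero_mul]

lemma wzCert_zero (n k : ℤ) : wzCert n k 0 = 0 := by
  have h (b : ℤ) : binom (0 - 1) b = 0 := binom_eq_zero (by omega)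
  simp only [wzCert, h, mul_zero, sub_zero]

lemma wzCert_eq_zero_of_lt {n k j : ℤ} (h : k < j) : wzCert n k j = 0 := by
  have h1 (a : ℤ) : binom a (k - j - 1) = 0 := binom_eq_zero (by omega)
  have h2 (a : ℤ) : binom a (k - j) = 0 := binom_eq_zero (by omega)
  simp only [wzCert, h1, h2, zero_mul, sub_zero]

def binomSum (n k : ℤ) : ℤ :=
  ∑ j ∈ range (k + 1).toNat, binomTerm n k j

lemma binomSum_eq_sum_range (n k : ℤ) {K : ℕ} (hK : k + 1 ≤ K) :
    binomSum n k = ∑ j ∈ range K, binomTerm n k j :=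
  sum_subset (range_subset_range.2 (by omega)) fun j _ hj =>
    binomTerm_eq_zero_of_lt (by rw [mem_range] at hj; omega)

lemma binomSum_eq_zero_of_neg_left {n : ℤ} (hn : n < 0) (k : ℤ) : binomSum n k = 0 :=
  sum_eq_zero fun j _ => binomTerm_eq_zero_of_neg hn j.cast_nonneg

lemma binomSum_eq_zero_of_neg_right (n : ℤ) {k : ℤ} (hk : k < 0) : binomSum n k = 0 := by
  rw [binomSum, Int.toNat_eq_zero.2 (by omega), range_zero, sum_empty]

lemma binomSum_zero_zero : binomSum 0 0 = 1 := by
  decide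

lemma binomSum_add_three (n k : ℤ) (hnk : n + 3 ≠ 0 ∨ k ≠ 0) :
    binomSum (n + 3) k
      = binomSum (n + 2) (k - 1) + binomSum (n + 1) (k - 1) + binomSum n (k - 1)
        - binomSum n (k - 2) := by
  set K := (k + 1).toNat
  have telescope : ∑ j ∈ range K, (binomTerm (n + 3) k j - binomTerm (n + 2) (k - 1) j
      - binomTerm (n + 1) (k - 1) j - binomTerm n (k - 1) j + binomTerm n (k - 2) j) = 0 := by
    have := sum_range_sub (fun j : ℕ => wzCert (n + 3) k j) K
    push_cast at this
    rw [sum_congr rfl fun (j : ℕ) _ => binomTerm_add_three_sub_eq_wzCert_sub n k j hnk, this,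
      wzCert_eq_zero_of_lt (by omega), wzCert_zero, sub_zero]
  rw [binomSum_eq_sum_range (n + 3) k (K := K) (by omega),
    binomSum_eq_sum_range (n + 2) (k - 1) (K := K) (by omega),
    binomSum_eq_sum_range (n + 1) (k - 1) (K := K) (by omega),
    binomSum_eq_sum_range n (k - 1) (K := K) (by omega),
    binomSum_eq_sum_range n (k - 2) (K := K) (by omega)]
  simp only [sum_add_distrib, sum_sub_distrib] at telescope
  linarith

noncomputable def fundamentalSeq : ℕ → ℤ[X]
  | 0 => 1
  | 1 => X
  | 2 => X + X ^ 2
  | (n + 3) =>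
    X * fundamentalSeq (n + 2) + X * fundamentalSeq (n + 1) + (X - X ^ 2) * fundamentalSeq n

lemma fundamentalSeq_add_three (n : ℕ) :
    fundamentalSeq (n + 3) = X * fundamentalSeq (n + 2) + X * fundamentalSeq (n + 1)
      + (X - X ^ 2) * fundamentalSeq n := by
  rw [fundamentalSeq]

lemma coeff_X_pow_mul_of_coeff_eq {R : Type*} [Semiring R] {p : R[X]} {f : ℤ → R}
    (hp : ∀ k : ℕ, p.coeff k = f k) (hf : ∀ k < 0, f k = 0) (i d : ℕ) :
    (X ^ i * p).coeff d = f (d - i) := by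
  rw [coeff_X_pow_mul']
  split_ifs with h
  · rw [hp, Nat.cast_sub h]
  · rw [hf _ (by omega)]

lemma coeff_fundamentalSeq (n : ℕ) :
    ∀ k : ℕ, (fundamentalSeq n).coeff k = binomSum n k := by
  induction n using Nat.strong_induction_on with
  | _ n ih =>
  have shift (m : ℕ) (hm : m < n) (i k : ℕ) :
      (X ^ i * fundamentalSeq m).coeff k = binomSum m (k - i) :=
    coeff_X_pow_mul_of_coeff_eq (ih m hm) (fun _ => binomSum_eq_zero_of_neg_right _) i k
  intro k
  match n with
  | 0 =>
    rcases k with _ | k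
    · simpa [fundamentalSeq] using binomSum_zero_zero.symm
    · have := binomSum_add_three (-3) (k + 1) (by omega)
      norm_num [binomSum_eq_zero_of_neg_left] at this
      simp [fundamentalSeq, coeff_one, this]
  | 1 =>
    have := binomSum_add_three (-2) k (by omega)
    norm_num [binomSum_eq_zero_of_neg_left] at this
    rw [show fundamentalSeq 1 = X ^ 1 * fundamentalSeq 0 by simp [fundamentalSeq],
      shift 0 (by omega)]
    push_cast
    exact this.symm
  | 2 =>
    have := binomSum_add_three (-1) k (by omega)
    norm_num [binomSum_eq_zero_of_neg_left] at this
    rw [show fundamentalSeq 2 = X ^ 1 * fundamentalSeq 1 + X ^ 1 * fundamentalSeq 0 by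
        simp [fundamentalSeq]; ring,
      coeff_add, shift 0 (by omega), shift 1 (by omega)]
    push_cast
    exact this.symm
  | m + 3 =>
    rw [fundamentalSeq_add_three, show ∀ p q r : ℤ[X], X * p + X * q + (X - X ^ 2) * r
        = X ^ 1 * p + X ^ 1 * q + X ^ 1 * r - X ^ 2 * r by intros; ring,
      coeff_sub, coeff_add, coeff_add, shift _ (by omega), shift _ (by omega),
      shift _ (by omega), shift _ (by omega)]
    push_cast
    rw [binomSum_add_three _ _ (by omega)]

lemma D_eq_fundamentalSeq (n : ℕ) :
    D (n + 3)
      = fundamentalSeq (n + 3) + fundamentalSeq (n + 2) - X ^ 2 * fundamentalSeq (n + 1) := by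
  induction n using Nat.strong_induction_on with
  | _ n ih =>
  match n with
  | 0 | 1 | 2 => simp only [D, fundamentalSeq]; ring
  | m + 3 =>
    have h3 := ih m (by omega)
    have h4 := ih (m + 1) (by omega)
    have h5 := ih (m + 2) (by omega)
    have a4 := fundamentalSeq_add_three (m + 1)
    have a5 := fundamentalSeq_add_three (m + 2)
    have a6 := fundamentalSeq_add_three (m + 3)
    rw [show m + 3 + 3 = m + 6 from rfl, D]
    simp only [add_assoc, Nat.reduceAdd] at *
    linear_combination X * h5 + X * h4 + (X - X ^ 2) * h3 - a6 - a5 + X ^ 2 * a4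

theorem D_coeff (n k : ℕ) (hn : 3 ≤ n) :
    (D n).coeff k = ∑ j ∈ range (k + 1),
      (binom ((n : ℤ) - 2 * j) ((k : ℤ) - j) * binom (j : ℤ) ((n : ℤ) - k - j)
       + binom ((n : ℤ) - 2 * j - 1) ((k : ℤ) - j) * binom (j : ℤ) ((n : ℤ) - k - j - 1)
       - binom ((n : ℤ) - 2 * j - 2) ((k : ℤ) - j - 2) * binom (j : ℤ) ((n : ℤ) - k - j)) := by
  obtain ⟨m, rfl⟩ : ∃ m, n = m + 3 := ⟨n - 3, by omega⟩
  rw [D_eq_fundamentalSeq, coeff_sub, coeff_add, coeff_fundamentalSeq, coeff_fundamentalSeq,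
    coeff_X_pow_mul_of_coeff_eq (coeff_fundamentalSeq _) (fun _ => binomSum_eq_zero_of_neg_right _),
    binomSum_eq_sum_range _ _ (K := k + 1) (by omega),
    binomSum_eq_sum_range _ _ (K := k + 1) (by omega),
    binomSum_eq_sum_range _ _ (K := k + 1) (by omega), ← sum_add_distrib, ← sum_sub_distrib]
  refine sum_congr rfl fun j _ => ?_
  unfold binomTerm
  push_cast
  ring_nf
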